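/- arXiv:math/0501490 — 2 statements merged into one kernel-verified Lean document; each statement's English description precedes it below -/
import Mathlib

section
/- For the function f : Z(3)^3 → Z defined by f(x,y,z) = (x-y)(y-z)z on representatives {0,1,2}, the image of δf (over all inputs in Z(3)^4), together with its negatives, is exactly the set {0, ±1, ±2, ±4, ±5, ±7, ±8, ±11}. -/
theorem pm_image_delta_f :
    {k : ℤ | ∃ x y z w : ZMod 3,
      k = (fun x y z w : ZMod 3 =>
        (fun a b c : ZMod 3 => ((a.val : ℤ) - b.val) * ((b.val : ℤ) - c.val) * c.val) x z w
        - (fun a b c : ZMod 3 => ((a.val : ℤ) - b.val) * ((b.val : ℤ) - c.val) * c.val) x y w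
        + (fun a b c : ZMod 3 => ((a.val : ℤ) - b.val) * ((b.val : ℤ) - c.val) * c.val) x y z
        - (fun a b c : ZMod 3 => ((a.val : ℤ) - b.val) * ((b.val : ℤ) - c.val) * c.val) (2*y - x) z w
        + (fun a b c : ZMod 3 => ((a.val : ℤ) - b.val) * ((b.val : ℤ) - c.val) * c.val) (2*z - x) (2*z - y) w
        - (fun a b c : ZMod 3 => ((a.val : ℤ) - b.val) * ((b.val : ℤ) - c.val) * c.val) (2*w - x) (2*w - y) (2*w - z)) x y z w
      ∨ k = -((fun x y z w : ZMod 3 =>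
        (fun a b c : ZMod 3 => ((a.val : ℤ) - b.val) * ((b.val : ℤ) - c.val) * c.val) x z w
        - (fun a b c : ZMod 3 => ((a.val : ℤ) - b.val) * ((b.val : ℤ) - c.val) * c.val) x y w
        + (fun a b c : ZMod 3 => ((a.val : ℤ) - b.val) * ((b.val : ℤ) - c.val) * c.val) x y z
        - (fun a b c : ZMod 3 => ((a.val : ℤ) - b.val) * ((b.val : ℤ) - c.val) * c.val) (2*y - x) z w
        + (fun a b c : ZMod 3 => ((a.val : ℤ) - b.val) * ((b.val : ℤ) - c.val) * c.val) (2*z - x) (2*z - y) w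
        - (fun a b c : ZMod 3 => ((a.val : ℤ) - b.val) * ((b.val : ℤ) - c.val) * c.val) (2*w - x) (2*w - y) (2*w - z)) x y z w)}
    = {0, 1, -1, 2, -2, 4, -4, 5, -5, 7, -7, 8, -8, 11, -11} := by
  ext k
  simp only [Set.mem_setOf_eq, Set.mem_insert_iff, Set.mem_singleton_iff]
  constructor
  · rintro ⟨x, y, z, w, h | h⟩ <;> subst h <;>
      fin_cases x <;> fin_cases y <;> fin_cases z <;> fin_cases w <;> decide
  · rintro (h | h | h | h | h | h | h | h | h | h | h | h | h | h | h) <;> subst h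
    · exact ⟨0, 0, 0, 0, Or.inl (by decide)⟩
    · exact ⟨1, 2, 1, 0, Or.inl (by decide)⟩
    · exact ⟨0, 1, 2, 1, Or.inl (by decide)⟩
    · exact ⟨0, 1, 0, 1, Or.inl (by decide)⟩
    · exact ⟨1, 0, 2, 0, Or.inl (by decide)⟩
    · exact ⟨0, 1, 2, 0, Or.inl (by decide)⟩
    · exact ⟨0, 2, 1, 0, Or.inl (by decide)⟩
    · exact ⟨1, 0, 1, 2, Or.inl (by decide)⟩
    · exact ⟨2, 0, 2, 1, Or.inl (by decide)⟩
    · exact ⟨0, 1, 0, 2, Or.inl (by decide)⟩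
    · exact ⟨1, 2, 1, 2, Or.inl (by decide)⟩
    · exact ⟨0, 2, 1, 2, Or.inr (by decide)⟩
    · exact ⟨0, 2, 1, 2, Or.inl (by decide)⟩
    · exact ⟨0, 2, 0, 1, Or.inl (by decide)⟩
    · exact ⟨0, 2, 0, 1, Or.inr (by decide)⟩
end

section
/- None of the four integers -25720, -25428, -24424, -21684 can be written as a sum of at most 2 elements (counted with multiplicity) from the set ±Im(δf), where f(x,y,z) = (x+y)^2(y-z)^3·z^5 on Z(4) with x*y := (2y-x) mod 4 and δf the quandle coboundary; equivalently [W_f(D₅,φ̄) - Φ_f(D₆,0)] ∩ Δ_i(f) = ∅ for i = 0, 1, 2. -/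
set_option maxRecDepth 100000
set_option maxHeartbeats 4000000
def dlist : List ℤ := [-76268, -59688, -59048, -56104, -53100, -52780, -48856, -46296, -44028, -31616, -31232, -30592, -29612, -28476, -27692, -27264, -26240, -25264, -25216, -23500, -19612, -18964, -17696, -16928, -15424, -14292, -8928, -8716, -8472, -8064, -7904, -7748, -7648, -6936, -6624, -6552, -6212, -6084, -4828, -4524, -4204, -3904, -3108, -2784, -2280, -2212, -2112, -2048, -2016, -2000, -1440, -1344, -1280, -1260, -1088, -1024, -976, -868, -864, -704, -640, -612, -492, -476, -416, -384, -364, -320, -280, -228, -204, -160, -76, -64, -48, -28, 0, 28, 48, 64, 76, 160, 204, 228, 280, 320, 364, 384, 416, 476, 492, 612, 640, 704, 864, 868, 976, 1024, 1088, 1260, 1280, 1344, 1440, 2000, 2016, 2048, 2112, 2212, 2280, 2784, 3108, 3904, 4204, 4524, 4828, 6084, 6212, 6552, 6624, 6936, 7648, 7748, 7904, 8064, 8472, 8716, 8928, 14292, 15424, 16928, 17696, 18964, 19612, 23500, 25216, 25264, 26240, 27264, 27692, 28476, 29612, 30592, 31232, 31616, 44028, 46296, 48856, 52780, 53100, 56104,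 59048, 59688, 76268]

theorem torus_link_lower_bound :
    let q : ZMod 4 → ZMod 4 → ZMod 4 := fun x y => 2*y - x
    let f : ZMod 4 → ZMod 4 → ZMod 4 → ℤ := fun x y z =>
      ((x.val : ℤ) + y.val)^2 * ((y.val : ℤ) - z.val)^3 * (z.val : ℤ)^5
    let δf : ZMod 4 → ZMod 4 → ZMod 4 → ZMod 4 → ℤ := fun x y z w =>
      f x z w - f x y w + f x y z
        - f (q x y) z w + f (q x z) (q y z) w - f (q x w) (q y w) (q z w)
    let S : Set ℤ := {k | ∃ x y z w : ZMod 4, k = δf x y z w ∨ k = -(δf x y z w)}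
    let Δ₂ : Set ℤ := {k | ∃ a ∈ S, ∃ b ∈ S, k = a + b}
    ∀ v ∈ ({-25720, -25428, -24424, -21684} : Set ℤ),
      v ≠ 0 ∧ v ∉ S ∧ v ∉ Δ₂ := by
  intro q f δf S Δ₂
  have hmem : ∀ x y z w : ZMod 4, δf x y z w ∈ dlist ∧ -(δf x y z w) ∈ dlist := by
    decide
  have hS : ∀ k ∈ S, k ∈ dlist := by
    rintro k ⟨x, y, z, w, hk | hk⟩
    · exact hk ▸ (hmem x y z w).1
    · exact hk ▸ (hmem x y z w).2
  have hsum : ∀ a ∈ dlist, ∀ b ∈ dlist,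
      a + b ≠ -25720 ∧ a + b ≠ -25428 ∧ a + b ≠ -24424 ∧ a + b ≠ -21684 := by
    decide
  intro v hv
  have hvS : v ∉ S := by
    intro h
    have := hS v h
    rcases hv with h1 | h1 | h1 | h1 <;> subst h1 <;> revert this <;> decide
  refine ⟨?_, hvS, ?_⟩
  · rcases hv with h1 | h1 | h1 | h1 <;> subst h1 <;> decide
  · rintro ⟨a, ha, b, hb, hab⟩
    have ha' := hS a ha
    have hb' := hS b hb
    have := hsum a ha' b hb'
    rcases hv with h1 | h1 | h1 | h1 <;> subst h1 <;> simp_all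
end
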